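/- If n has binary representation n = ∑_{k=0}^m ε_k 2^k with ε_k ∈ {0,1}, then v(n) = (1/3) ∑_{k=0}^m ε_k / 2^k. -/
import Mathlib


open Finset

/-- The largest odd divisor of `k`. -/
def oddPart (k : ℕ) : ℕ := ordCompl[2] k

/-- `V n = ∑_{k=1}^n α(k)/k` as a rational number. -/
def V (n : ℕ) : ℚ := ∑ k ∈ Finset.Icc 1 n, (oddPart k : ℚ) / k

/-- `v n = V n - 2n/3`. -/
def v (n : ℕ) : ℚ := V n - 2 * n / 3

/-- `U n = ∑_{k=1}^n α(k)`. -/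
def U (n : ℕ) : ℕ := ∑ k ∈ Finset.Icc 1 n, oddPart k

/-- `G n = ∑_{k=1}^n (n+1-k)·α(k)/k` as a rational number. -/
def G (n : ℕ) : ℚ := ∑ k ∈ Finset.Icc 1 n, ((n : ℚ) + 1 - k) * (oddPart k : ℚ) / k

/-- `g n = n(n+2)/3 - G n`. -/
def g (n : ℕ) : ℚ := n * (n + 2) / 3 - G n

lemma oddPart_odd {k : ℕ} (h : Odd k) : oddPart k = k := by
  unfold oddPart
  rw [Nat.factorization_eq_zero_of_not_dvd
    (Nat.two_dvd_ne_zero.mpr (Nat.odd_iff.mp h))]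
  simp

lemma oddPart_two_mul {k : ℕ} (hk : k ≠ 0) : oddPart (2 * k) = oddPart k := by
  unfold oddPart
  rw [Nat.factorization_mul two_ne_zero hk]
  simp only [Finsupp.add_apply, Nat.Prime.factorization_self Nat.prime_two]
  rw [pow_add, pow_one]
  rw [Nat.mul_div_mul_comm (by norm_num) (Nat.ordProj_dvd k 2)]
  simp

lemma V_succ (n : ℕ) : V (n + 1) = V n + (oddPart (n + 1) : ℚ) / (n + 1) := by
  unfold V
  rw [Finset.sum_Icc_succ_top (by omega)]
  push_cast
  ring

lemma V_two_mul (n : ℕ) : V (2 * n) = n + V n / 2 := by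
  induction n with
  | zero => simp [V]
  | succ n ih =>
    have e1 : 2 * (n + 1) = 2 * n + 1 + 1 := by ring
    rw [e1, V_succ, V_succ, ih, V_succ]
    rw [oddPart_odd ⟨n, by ring⟩]
    rw [show 2 * n + 1 + 1 = 2 * (n + 1) from by ring,
      oddPart_two_mul (Nat.succ_ne_zero n)]
    have h1 : ((2 * n + 1 : ℕ) : ℚ) ≠ 0 := by positivity
    have h2 : ((n : ℚ) + 1) ≠ 0 := by positivity
    push_cast at h1 ⊢
    field_simp
    ring

lemma v_two_mul (n : ℕ) : v (2 * n) = v n / 2 := by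
  unfold v
  rw [V_two_mul]
  push_cast
  ring

lemma v_two_mul_add_one (n : ℕ) : v (2 * n + 1) = v n / 2 + 1 / 3 := by
  unfold v
  rw [V_succ, V_two_mul, oddPart_odd ⟨n, by ring⟩]
  have h1 : ((2 * n + 1 : ℕ) : ℚ) ≠ 0 := by positivity
  push_cast at h1 ⊢
  field_simp
  ring

theorem stmt3 (m : ℕ) (ε : ℕ → ℕ) (hε : ∀ k, ε k ≤ 1) (n : ℕ)
    (hn : n = ∑ k ∈ Finset.range (m + 1), ε k * 2 ^ k) :
    v n = (1 / 3) * ∑ k ∈ Finset.range (m + 1), (ε k : ℚ) / 2 ^ k := by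
  induction m generalizing ε n with
  | zero =>
    simp only [zero_add, Finset.sum_range_one, pow_zero, mul_one, div_one] at hn ⊢
    rcases Nat.le_one_iff_eq_zero_or_eq_one.mp (hε 0) with h | h
    · subst hn
      rw [h]
      simp [v, V]
    · subst hn
      rw [h]
      have : Finset.Icc 1 1 = {1} := rfl
      norm_num [v, V, this, oddPart]
  | succ m ih =>
    have ihv : v (∑ k ∈ Finset.range (m + 1), ε (k + 1) * 2 ^ k)
        = 1 / 3 * ∑ k ∈ Finset.range (m + 1), (ε (k + 1) : ℚ) / 2 ^ k :=
      ih (fun k => ε (k + 1)) (fun k => hε (k + 1)) _ rfl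
    have key : n = 2 * (∑ k ∈ Finset.range (m + 1), ε (k + 1) * 2 ^ k) + ε 0 := by
      rw [hn, Finset.sum_range_succ', pow_zero, mul_one, Finset.mul_sum]
      congr 1
      exact Finset.sum_congr rfl fun k _ => by ring
    have hsum : ∑ k ∈ Finset.range (m + 1 + 1), (ε k : ℚ) / 2 ^ k
        = (ε 0 : ℚ) + (1 / 2) * ∑ k ∈ Finset.range (m + 1), (ε (k + 1) : ℚ) / 2 ^ k := by
      rw [Finset.sum_range_succ', pow_zero, Finset.mul_sum]
      rw [add_comm]
      congr 1
      · norm_num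
      · exact Finset.sum_congr rfl fun k _ => by rw [pow_succ]; ring
    rcases Nat.le_one_iff_eq_zero_or_eq_one.mp (hε 0) with h | h
    · rw [h, add_zero] at key
      rw [key, v_two_mul, ihv, hsum, h]
      push_cast
      ring
    · rw [h] at key
      rw [key, v_two_mul_add_one, ihv, hsum, h]
      push_cast
      ring
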